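/- arXiv:1806.01051 — 2 statements merged into one kernel-verified Lean document; each statement's English description precedes it below -/
import Mathlib

section
/- Let H₁ and H₂ be Hilbert spaces over 𝕜 (𝕜 = ℝ or ℂ) with H₁ nontrivial, and let T : H₁ → H₂ be a bounded linear operator. For x ∈ H₁ with ‖x‖ = 1, the following are equivalent: (i) ‖Tx‖ = m(T); (iii) ⟨Tx, Ty⟩ = m(T)² ⟨x, y⟩ for every y ∈ H₁. -/
/-- The minimum norm of a bounded linear operator. -/
noncomputable def minNorm {𝕜 X Y : Type*} [RCLike 𝕜] [NormedAddCommGroup X]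
    [NormedSpace 𝕜 X] [NormedAddCommGroup Y] [NormedSpace 𝕜 Y] (T : X →L[𝕜] Y) : ℝ :=
  sInf {r : ℝ | ∃ x : X, ‖x‖ = 1 ∧ r = ‖T x‖}

lemma minNorm_nonneg {𝕜 X Y : Type*} [RCLike 𝕜] [NormedAddCommGroup X]
    [NormedSpace 𝕜 X] [NormedAddCommGroup Y] [NormedSpace 𝕜 Y] [Nontrivial X]
    (T : X →L[𝕜] Y) : 0 ≤ minNorm T := by
  apply le_csInf
  · obtain ⟨v, hv⟩ := exists_ne (0 : X)
    have hv' : ‖v‖ ≠ 0 := norm_ne_zero_iff.mpr hv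
    refine ⟨‖T (((‖v‖⁻¹ : ℝ) : 𝕜) • v)‖, ((‖v‖⁻¹ : ℝ) : 𝕜) • v, ?_, rfl⟩
    rw [norm_smul, RCLike.norm_ofReal, abs_of_nonneg (by positivity), inv_mul_cancel₀ hv']
  · rintro r ⟨u, hu, rfl⟩; exact norm_nonneg _

lemma minNorm_mul_le {𝕜 X Y : Type*} [RCLike 𝕜] [NormedAddCommGroup X]
    [NormedSpace 𝕜 X] [NormedAddCommGroup Y] [NormedSpace 𝕜 Y]
    (T : X →L[𝕜] Y) (v : X) : minNorm T * ‖v‖ ≤ ‖T v‖ := by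
  rcases eq_or_ne v 0 with rfl | hv
  · simp
  · have hv' : (0:ℝ) < ‖v‖ := norm_pos_iff.mpr hv
    have hu : ‖((‖v‖⁻¹ : ℝ) : 𝕜) • v‖ = 1 := by
      rw [norm_smul, RCLike.norm_ofReal, abs_of_nonneg (by positivity),
        inv_mul_cancel₀ hv'.ne']
    have hle : minNorm T ≤ ‖T (((‖v‖⁻¹ : ℝ) : 𝕜) • v)‖ :=
      csInf_le ⟨0, by rintro r ⟨u, hu, rfl⟩; exact norm_nonneg _⟩ ⟨_, hu, rfl⟩
    rw [map_smul, norm_smul, RCLike.norm_ofReal, abs_of_nonneg (by positivity)] at hle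
    rw [← le_div_iff₀ hv', div_eq_inv_mul]
    exact hle

theorem stmt_7 {𝕜 H₁ H₂ : Type*} [RCLike 𝕜]
    [NormedAddCommGroup H₁] [InnerProductSpace 𝕜 H₁] [CompleteSpace H₁] [Nontrivial H₁]
    [NormedAddCommGroup H₂] [InnerProductSpace 𝕜 H₂] [CompleteSpace H₂]
    (T : H₁ →L[𝕜] H₂) (x : H₁) (hx : ‖x‖ = 1) :
    ‖T x‖ = minNorm T ↔
      ∀ y : H₁, (inner 𝕜 (T x) (T y) : 𝕜) = ((minNorm T : 𝕜) ^ 2) * inner 𝕜 x y := by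
  set m := minNorm T with hm
  have hm0 : 0 ≤ m := minNorm_nonneg T
  constructor
  · intro h y
    set b : 𝕜 := (inner 𝕜 (T x) (T y) : 𝕜) - ((m : 𝕜) ^ 2) * inner 𝕜 x y with hb
    have hq : 0 ≤ ‖T y‖ ^ 2 - m ^ 2 * ‖y‖ ^ 2 := by
      have := minNorm_mul_le T y
      nlinarith [norm_nonneg (T y), norm_nonneg y, mul_nonneg hm0 (norm_nonneg y)]
    set q : ℝ := ‖T y‖ ^ 2 - m ^ 2 * ‖y‖ ^ 2 with hqdef
    have key : ∀ c : 𝕜, 0 ≤ 2 * RCLike.re (c * b) + ‖c‖ ^ 2 * q := by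
      intro c
      have h1 : m * ‖x + c • y‖ ≤ ‖T (x + c • y)‖ := minNorm_mul_le T _
      have h2 : m ^ 2 * ‖x + c • y‖ ^ 2 ≤ ‖T (x + c • y)‖ ^ 2 := by
        nlinarith [norm_nonneg (x + c • y), mul_nonneg hm0 (norm_nonneg (x + c • y))]
      have e1 : ‖T (x + c • y)‖ ^ 2
          = ‖T x‖ ^ 2 + 2 * RCLike.re (c * (inner 𝕜 (T x) (T y) : 𝕜)) + ‖c‖ ^ 2 * ‖T y‖ ^ 2 := by
        rw [map_add, map_smul, @norm_add_sq 𝕜, inner_smul_right, norm_smul]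
        ring
      have e2 : ‖x + c • y‖ ^ 2
          = ‖x‖ ^ 2 + 2 * RCLike.re (c * (inner 𝕜 x y : 𝕜)) + ‖c‖ ^ 2 * ‖y‖ ^ 2 := by
        rw [@norm_add_sq 𝕜, inner_smul_right, norm_smul]
        ring
      have e3 : RCLike.re (c * b)
          = RCLike.re (c * (inner 𝕜 (T x) (T y) : 𝕜)) - m ^ 2 * RCLike.re (c * (inner 𝕜 x y : 𝕜)) := by
        have : c * b = c * (inner 𝕜 (T x) (T y) : 𝕜)
            - ((m ^ 2 : ℝ) : 𝕜) * (c * (inner 𝕜 x y : 𝕜)) := by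
          rw [hb]; push_cast; ring
        rw [this, map_sub, RCLike.re_ofReal_mul]
      rw [e1, e2, h, hx] at h2
      rw [e3, hqdef]
      nlinarith [h2]
    -- now show b = 0
    by_contra hbne
    have hbne' : b ≠ 0 := sub_ne_zero.mpr hbne
    have hb2 : (0:ℝ) < ‖b‖ ^ 2 := pow_pos (norm_pos_iff.mpr hbne') 2
    set t : ℝ := 1 / (q + 1) with htdef
    have hq1 : (0:ℝ) < q + 1 := by linarith
    have ht : 0 < t := by rw [htdef]; exact one_div_pos.mpr hq1
    have htq : t * (q + 1) = 1 := by rw [htdef]; field_simp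
    set c : 𝕜 := ((-t : ℝ) : 𝕜) * (starRingEnd 𝕜) b with hcdef
    have hcb : RCLike.re (c * b) = -t * ‖b‖ ^ 2 := by
      have : c * b = ((-t : ℝ) : 𝕜) * (((‖b‖ : 𝕜)) ^ 2) := by
        rw [hcdef, mul_assoc, RCLike.conj_mul]
      rw [this, ← RCLike.ofReal_pow, ← RCLike.ofReal_mul, RCLike.ofReal_re]
    have hcn : ‖c‖ ^ 2 = t ^ 2 * ‖b‖ ^ 2 := by
      rw [hcdef, norm_mul, RCLike.norm_ofReal, RCLike.norm_conj, mul_pow, sq_abs]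
      ring
    have hk := key c
    rw [hcb, hcn] at hk
    nlinarith [hk, hb2, ht, hq, mul_pos ht hb2]
  · intro h
    have h1 := h x
    rw [inner_self_eq_norm_sq_to_K, inner_self_eq_norm_sq_to_K, hx] at h1
    have h2 : (‖T x‖ : ℝ) ^ 2 = m ^ 2 := by
      have : ((‖T x‖ ^ 2 : ℝ) : 𝕜) = ((m ^ 2 : ℝ) : 𝕜) := by push_cast; simpa using h1
      exact_mod_cast this
    nlinarith [norm_nonneg (T x)]
end

section
/- Let H₁ and H₂ be complete Hilbert spaces over 𝕜 (𝕜 = ℝ or ℂ) with H₁ nontrivial, and let T : H₁ → H₂ be a bounded linear operator. Then the linear span of m_T equals the eigenspace of T*T corresponding to m(T)², i.e., span(m_T) = {x ∈ H₁ : T*Tx = m(T)² x}, where T* denotes the Hilbert-space adjoint of T. In particular, the dimension of the subspace whose unit sphere is m_T equals the geometric multiplicity of the eigenvalue m(T)² of T*T. -/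
open RCLike ContinuousLinearMap
open scoped InnerProductSpace

section

variable {𝕜 E F : Type*} [RCLike 𝕜]

section Positive

variable [NormedAddCommGroup E] [InnerProductSpace 𝕜 E]

theorem LinearMap.IsPositive.apply_eq_zero_of_re_inner_map_self_eq_zero {A : E →ₗ[𝕜] E}
    (hA : A.IsPositive) {x : E} (hx : re ⟪A x, x⟫_𝕜 = 0) : A x = 0 := by
  have h_orth : ∀ y, re ⟪A x, y⟫_𝕜 = 0 := by
    intro y
    have hq : ∀ t : ℝ, 0 ≤ re ⟪A y, y⟫_𝕜 * (t * t) + 2 * re ⟪A x, y⟫_𝕜 * t + 0 := by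
      intro t
      have h := hA.re_inner_nonneg_left (x + (t : 𝕜) • y)
      have hsym : re ⟪A y, x⟫_𝕜 = re ⟪A x, y⟫_𝕜 := by
        rw [hA.isSymmetric, inner_re_symm]
      simp only [map_add, map_smul, inner_add_left, inner_add_right, inner_smul_left,
        inner_smul_right, conj_ofReal, re_ofReal_mul, hx, hsym] at h
      linarith
    have hdisc := discrim_le_zero hq
    rw [discrim] at hdisc
    nlinarith [sq_nonneg (re ⟪A x, y⟫_𝕜)]
  simpa [inner_self_eq_norm_sq] using h_orth (A x)

end Positive

namespace ContinuousLinearMap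

variable [NormedAddCommGroup E] [InnerProductSpace 𝕜 E] [CompleteSpace E]
  [NormedAddCommGroup F] [InnerProductSpace 𝕜 F] [CompleteSpace F]

theorem re_inner_adjoint_comp_self_sub_sq_smul_id_apply (T : E →L[𝕜] F) (c : ℝ) (x : E) :
    re ⟪((adjoint T ∘L T : E →ₗ[𝕜] E) - ((c : 𝕜) ^ 2) • LinearMap.id : E →ₗ[𝕜] E) x, x⟫_𝕜 =
      ‖T x‖ ^ 2 - c ^ 2 * ‖x‖ ^ 2 := by
  rw [apply_norm_sq_eq_inner_adjoint_left]
  simp only [LinearMap.sub_apply, LinearMap.smul_apply, LinearMap.id_apply, coe_coe,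
    inner_sub_left, inner_smul_left, map_sub, ← ofReal_pow, conj_ofReal, re_ofReal_mul,
    inner_self_eq_norm_sq]

theorem isPositive_adjoint_comp_self_sub_sq_smul_id (T : E →L[𝕜] F) {c : ℝ} (hc₀ : 0 ≤ c)
    (hc : ∀ x, c * ‖x‖ ≤ ‖T x‖) :
    ((adjoint T ∘L T : E →ₗ[𝕜] E) - ((c : 𝕜) ^ 2) • LinearMap.id).IsPositive := by
  refine ⟨(isPositive_adjoint_comp_self T).isSymmetric.sub
    (LinearMap.IsSymmetric.id.smul (by rw [map_pow, conj_ofReal])), fun x => ?_⟩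
  rw [re_inner_adjoint_comp_self_sub_sq_smul_id_apply, sub_nonneg, ← mul_pow]
  exact pow_le_pow_left₀ (by positivity) (hc x) 2

theorem adjoint_apply_apply_eq_sq_smul_iff (T : E →L[𝕜] F) {c : ℝ} (hc₀ : 0 ≤ c)
    (hc : ∀ x, c * ‖x‖ ≤ ‖T x‖) (x : E) :
    adjoint T (T x) = ((c : 𝕜) ^ 2) • x ↔ ‖T x‖ = c * ‖x‖ := by
  constructor
  · intro h
    have hx := re_inner_adjoint_comp_self_sub_sq_smul_id_apply T c x
    rw [LinearMap.sub_apply, coe_coe, comp_apply, h, LinearMap.smul_apply, LinearMap.id_apply,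
      sub_self, inner_zero_left, map_zero, eq_comm, sub_eq_zero, ← mul_pow] at hx
    exact (pow_left_inj₀ (norm_nonneg _) (by positivity) two_ne_zero).1 hx
  · intro h
    refine sub_eq_zero.1 ((isPositive_adjoint_comp_self_sub_sq_smul_id T hc₀ hc)
      |>.apply_eq_zero_of_re_inner_map_self_eq_zero ?_)
    rw [re_inner_adjoint_comp_self_sub_sq_smul_id_apply, h]
    ring

end ContinuousLinearMap

section MinNorm

variable [NormedAddCommGroup E] [NormedSpace 𝕜 E] [NormedAddCommGroup F] [NormedSpace 𝕜 F]

theorem minNorm_nonneg_s10 (T : E →L[𝕜] F) : 0 ≤ minNorm T :=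
  Real.sInf_nonneg fun _ ⟨_, _, hr⟩ => hr ▸ norm_nonneg _

theorem minNorm_mul_norm_le (T : E →L[𝕜] F) (x : E) : minNorm T * ‖x‖ ≤ ‖T x‖ := by
  rcases eq_or_ne x 0 with rfl | hx
  · simp
  have hle : minNorm T ≤ ‖T ((‖x‖⁻¹ : 𝕜) • x)‖ :=
    csInf_le ⟨0, fun _ ⟨_, _, hr⟩ => hr ▸ norm_nonneg _⟩ ⟨_, norm_smul_inv_norm hx, rfl⟩
  rw [map_smul, norm_smul, ← ofReal_inv, norm_ofReal, abs_inv, abs_norm] at hle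
  rwa [le_inv_mul_iff₀ (norm_pos_iff.2 hx), mul_comm] at hle

end MinNorm

theorem Submodule.span_setOf_mem_and_norm_eq_one [NormedAddCommGroup E] [NormedSpace 𝕜 E]
    (V : Submodule 𝕜 E) : span 𝕜 {x | x ∈ V ∧ ‖x‖ = 1} = V := by
  refine le_antisymm (span_le.2 fun x hx => hx.1) fun x hx => ?_
  rcases eq_or_ne x 0 with rfl | hx₀
  · exact zero_mem _
  have hunit : (‖x‖⁻¹ : 𝕜) • x ∈ span 𝕜 {x | x ∈ V ∧ ‖x‖ = 1} :=
    subset_span ⟨V.smul_mem _ hx, norm_smul_inv_norm hx₀⟩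
  simpa [smul_smul, hx₀] using smul_mem _ (‖x‖ : 𝕜) hunit

end

theorem stmt_10_general {𝕜 H₁ H₂ : Type*} [RCLike 𝕜]
    [NormedAddCommGroup H₁] [InnerProductSpace 𝕜 H₁] [CompleteSpace H₁]
    [NormedAddCommGroup H₂] [InnerProductSpace 𝕜 H₂] [CompleteSpace H₂]
    (T : H₁ →L[𝕜] H₂) :
    (Submodule.span 𝕜 {x : H₁ | ‖x‖ = 1 ∧ ‖T x‖ = minNorm T} : Set H₁) =
      {x : H₁ | ContinuousLinearMap.adjoint T (T x) = ((minNorm T : 𝕜) ^ 2) • x} := by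
  set V := Module.End.eigenspace (adjoint T ∘L T : H₁ →ₗ[𝕜] H₁) ((minNorm T : 𝕜) ^ 2)
  have hV : {x : H₁ | adjoint T (T x) = ((minNorm T : 𝕜) ^ 2) • x} = V := by
    ext x; simp [V]
  have hmem : ∀ x, x ∈ V ↔ ‖T x‖ = minNorm T * ‖x‖ := fun x => by
    rw [← SetLike.mem_coe, ← hV, Set.mem_ofPred_eq,
      adjoint_apply_apply_eq_sq_smul_iff T (minNorm_nonneg_s10 T) (minNorm_mul_norm_le T)]
  have hattain : {x : H₁ | ‖x‖ = 1 ∧ ‖T x‖ = minNorm T} = {x | x ∈ V ∧ ‖x‖ = 1} := by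
    ext x
    simp only [Set.mem_ofPred_eq, hmem]
    grind
  rw [hV, hattain, Submodule.span_setOf_mem_and_norm_eq_one]

theorem stmt_10 {𝕜 H₁ H₂ : Type*} [RCLike 𝕜]
    [NormedAddCommGroup H₁] [InnerProductSpace 𝕜 H₁] [CompleteSpace H₁] [Nontrivial H₁]
    [NormedAddCommGroup H₂] [InnerProductSpace 𝕜 H₂] [CompleteSpace H₂]
    (T : H₁ →L[𝕜] H₂) :
    (Submodule.span 𝕜 {x : H₁ | ‖x‖ = 1 ∧ ‖T x‖ = minNorm T} : Set H₁) =
      {x : H₁ | ContinuousLinearMap.adjoint T (T x) = ((minNorm T : 𝕜) ^ 2) • x} :=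
  stmt_10_general T
end
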